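/- Let J_1, ..., J_r be anticommuting orthogonal complex structures on a real inner product space V, J = J_r, and for nonzero k ∈ ℤ^r let A be the operator on V ⊕ V given by A(X,Y) = 2π( k_r X - J(Σ_{l<r} k_l J_l) Y , J(Σ_{l<r} k_l J_l) X - k_r Y ). Then the operator norm of A^{-1} equals 1/(2π‖k‖). -/

import Mathlib

open scoped InnerProductSpace
open Real

/-!
Orthogonal complex structures are skew-adjoint, and anticommuting ones map each vector to
orthogonal vectors; hence `S = ∑_{l<r} k_l J_l` satisfies `‖S x‖² = (∑_{l<r} k_l²) ‖x‖²`, and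
`B = J_r S` is skew-adjoint with `‖B x‖ = ‖S x‖`. Expanding `‖A (X, Y)‖²`, skew-adjointness of `B`
cancels the cross terms, so `A` is `2π‖k‖` times an isometry and `A⁻¹` is `(2π‖k‖)⁻¹` times one.
-/

namespace LinearMap

theorem comp_sum_smul_eq_neg_of_anticomm {R M ι : Type*} [CommRing R] [AddCommGroup M]
    [Module R M] [Fintype ι] {f : M →ₗ[R] M} {J : ι → M →ₗ[R] M}
    (h : ∀ l, f ∘ₗ J l = -(J l ∘ₗ f)) (a : ι → R) :
    f ∘ₗ (∑ l, a l • J l) = -((∑ l, a l • J l) ∘ₗ f) := by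
  ext x
  simp only [comp_apply, neg_apply, sum_apply, smul_apply, map_sum, map_smul,
    ← Finset.sum_neg_distrib, ← smul_neg]
  exact Finset.sum_congr rfl fun l _ => congrArg _ (by simpa using congr($(h l) x))

variable {V : Type*} [NormedAddCommGroup V] [InnerProductSpace ℝ V]

theorem isSkewAdjoint_innerₗ_iff {f : V →ₗ[ℝ] V} :
    (innerₗ V).IsSkewAdjoint f ↔ ∀ x y, ⟪f x, y⟫_ℝ = -⟪x, f y⟫_ℝ := by
  simp [IsSkewAdjoint, IsAdjointPair]

theorem isSkewAdjoint_innerₗ_of_comp_self {f : V →ₗ[ℝ] V}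
    (horth : ∀ x y, ⟪f x, f y⟫_ℝ = ⟪x, y⟫_ℝ) (hsq : f ∘ₗ f = -id) :
    (innerₗ V).IsSkewAdjoint f := by
  refine isSkewAdjoint_innerₗ_iff.2 fun x y => ?_
  have hy : f (f y) = -y := by simpa using congr($hsq y)
  rw [← horth x (f y), hy, inner_neg_right, neg_neg]

theorem isSkewAdjoint_innerₗ_sum_smul {ι : Type*} [Fintype ι] {J : ι → V →ₗ[ℝ] V}
    (hJ : ∀ l, (innerₗ V).IsSkewAdjoint (J l)) (a : ι → ℝ) :
    (innerₗ V).IsSkewAdjoint ⇑(∑ l, a l • J l) :=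
  (mem_skewAdjointSubmodule _).1 <| Submodule.sum_mem _ fun l _ =>
    Submodule.smul_mem _ _ ((mem_skewAdjointSubmodule _).2 (hJ l))

variable {f g : V →ₗ[ℝ] V}

theorem inner_apply_apply_eq_zero_of_anticomm (hf : (innerₗ V).IsSkewAdjoint f)
    (hg : (innerₗ V).IsSkewAdjoint g) (hfg : f ∘ₗ g = -(g ∘ₗ f)) (x : V) :
    ⟪f x, g x⟫_ℝ = 0 := by
  rw [isSkewAdjoint_innerₗ_iff] at hf hg
  have hx : f (g x) = -g (f x) := by simpa using congr($hfg x)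
  have : ⟪f x, g x⟫_ℝ = -⟪f x, g x⟫_ℝ :=
    calc ⟪f x, g x⟫_ℝ = ⟪g (f x), x⟫_ℝ := by
          rw [hf, hx, inner_neg_right, neg_neg, real_inner_comm]
      _ = -⟪f x, g x⟫_ℝ := hg _ _
  linarith

theorem isSkewAdjoint_innerₗ_comp_of_anticomm (hf : (innerₗ V).IsSkewAdjoint f)
    (hg : (innerₗ V).IsSkewAdjoint g) (hfg : f ∘ₗ g = -(g ∘ₗ f)) :
    (innerₗ V).IsSkewAdjoint (f ∘ₗ g) := by
  rw [isSkewAdjoint_innerₗ_iff] at hf hg ⊢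
  intro x y
  have hy : f (g y) = -g (f y) := by simpa using congr($hfg y)
  rw [comp_apply, comp_apply, hf, hg, hy, inner_neg_right]

theorem norm_sum_smul_apply_sq {ι : Type*} [Fintype ι] (J : ι → V →ₗ[ℝ] V)
    (horth : ∀ l, ∀ x y : V, ⟪J l x, J l y⟫_ℝ = ⟪x, y⟫_ℝ)
    (hsq : ∀ l, J l ∘ₗ J l = -id)
    (hanti : ∀ l j, l ≠ j → J l ∘ₗ J j = -(J j ∘ₗ J l)) (a : ι → ℝ) (x : V) :
    ‖(∑ l, a l • J l) x‖ ^ 2 = (∑ l, a l ^ 2) * ‖x‖ ^ 2 := by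
  classical
  have hskew l := isSkewAdjoint_innerₗ_of_comp_self (horth l) (hsq l)
  rw [← real_inner_self_eq_norm_sq, ← real_inner_self_eq_norm_sq, sum_apply, sum_inner,
    Finset.sum_mul]
  refine Finset.sum_congr rfl fun l _ => ?_
  rw [inner_sum, Finset.sum_eq_single l]
  · simp only [smul_apply, real_inner_smul_left, real_inner_smul_right, horth]
    ring
  · intro j _ hjl
    simp only [smul_apply, real_inner_smul_left, real_inner_smul_right,
      inner_apply_apply_eq_zero_of_anticomm (hskew l) (hskew j) (hanti l j hjl.symm), mul_zero]
  · simp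

theorem norm_toLp_sub_eq_of_isSkewAdjoint {B : V →ₗ[ℝ] V} (hB : (innerₗ V).IsSkewAdjoint B)
    {μ : ℝ} (hBn : ∀ x, ‖B x‖ ^ 2 = μ * ‖x‖ ^ 2) (c : ℝ) (X Y : V) :
    ‖WithLp.toLp 2 (c • X - B Y, B X - c • Y)‖ = √(c ^ 2 + μ) * ‖WithLp.toLp 2 (X, Y)‖ := by
  have hsq : ‖WithLp.toLp 2 (c • X - B Y, B X - c • Y)‖ ^ 2
      = (c ^ 2 + μ) * ‖WithLp.toLp 2 (X, Y)‖ ^ 2 := by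
    simp only [WithLp.prod_norm_sq_eq_of_L2, WithLp.toLp_fst, WithLp.toLp_snd, norm_sub_sq_real,
      norm_smul, hBn, real_inner_smul_left, real_inner_smul_right, mul_pow, Real.norm_eq_abs,
      sq_abs, isSkewAdjoint_innerₗ_iff.1 hB X Y]
    ring
  rw [← Real.sqrt_sq (norm_nonneg _), hsq, Real.sqrt_mul' _ (sq_nonneg _),
    Real.sqrt_sq (norm_nonneg _)]

end LinearMap

namespace ContinuousLinearMap

variable {𝕜 E F : Type*} [NontriviallyNormedField 𝕜] [NormedAddCommGroup E] [NormedSpace 𝕜 E]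
  [NormedAddCommGroup F] [NormedSpace 𝕜 F]

theorem opNorm_eq_of_norm_apply_eq [Nontrivial E] {f : E →L[𝕜] F} {C : ℝ} (hC : 0 ≤ C)
    (hf : ∀ x, ‖f x‖ = C * ‖x‖) : ‖f‖ = C :=
  opNorm_eq_of_bounds hC (fun x => (hf x).le) fun _ _ hN => by
    obtain ⟨x, hx⟩ := exists_ne (0 : E)
    exact le_of_mul_le_mul_right ((hf x).symm.trans_le (hN x)) (norm_pos_iff.2 hx)

theorem opNorm_eq_inv_of_comp_eq_id [Nontrivial F] {A : E →L[𝕜] F} {A' : F →L[𝕜] E}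
    (h : A.comp A' = ContinuousLinearMap.id 𝕜 F) {C : ℝ} (hC : 0 < C) (hA : ∀ x, ‖A x‖ = C * ‖x‖) :
    ‖A'‖ = C⁻¹ :=
  opNorm_eq_of_norm_apply_eq (inv_nonneg.2 hC.le) fun y => by
    conv_rhs => rw [← show A (A' y) = y from congr($h y), hA, inv_mul_cancel_left₀ hC.ne']

end ContinuousLinearMap

theorem stmt4_general {V : Type*} [NormedAddCommGroup V] [InnerProductSpace ℝ V]
    [Nontrivial V] {m : ℕ} (J : Fin (m + 1) → (V →ₗ[ℝ] V))
    (horth : ∀ l, ∀ x y : V, ⟪J l x, J l y⟫_ℝ = ⟪x, y⟫_ℝ)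
    (hsq : ∀ l, J l ∘ₗ J l = -LinearMap.id)
    (hanti : ∀ l j, l ≠ j → J l ∘ₗ J j = -(J j ∘ₗ J l))
    (k : Fin (m + 1) → ℤ) (hk : k ≠ 0)
    (B : V →ₗ[ℝ] V)
    (hB : B = J (Fin.last m) ∘ₗ (∑ l : Fin m, ((k l.castSucc : ℝ) • J l.castSucc)))
    (A Ainv : WithLp 2 (V × V) →L[ℝ] WithLp 2 (V × V))
    (hA : ∀ X Y : V, A ((WithLp.equiv 2 (V × V)).symm (X, Y)) =
      (WithLp.equiv 2 (V × V)).symm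
        ((2 * π) • ((k (Fin.last m) : ℝ) • X - B Y),
         (2 * π) • (B X - (k (Fin.last m) : ℝ) • Y)))
    (h2 : A.comp Ainv = ContinuousLinearMap.id ℝ (WithLp 2 (V × V))) :
    ‖Ainv‖ = 1 / (2 * π * Real.sqrt (∑ l, (k l : ℝ) ^ 2)) := by
  have hskew l := LinearMap.isSkewAdjoint_innerₗ_of_comp_self (horth l) (hsq l)
  have hB_skew : (innerₗ V).IsSkewAdjoint B :=
    hB ▸ LinearMap.isSkewAdjoint_innerₗ_comp_of_anticomm (hskew _)
      (LinearMap.isSkewAdjoint_innerₗ_sum_smul (J := fun l : Fin m => J l.castSucc)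
        (fun _ => hskew _) _)
      (LinearMap.comp_sum_smul_eq_neg_of_anticomm
        (fun l => hanti _ _ (Fin.castSucc_lt_last l).ne') _)
  have hB_norm x : ‖B x‖ ^ 2 = (∑ l : Fin m, (k l.castSucc : ℝ) ^ 2) * ‖x‖ ^ 2 := by
    have hS := LinearMap.norm_sum_smul_apply_sq (fun l => J l.castSucc) (fun _ => horth _)
      (fun _ => hsq _) (fun _ _ hlj => hanti _ _ (Fin.castSucc_injective _ |>.ne hlj))
      (fun l => (k l.castSucc : ℝ)) x
    rw [hB, LinearMap.comp_apply, ← real_inner_self_eq_norm_sq, horth, real_inner_self_eq_norm_sq]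
    exact hS
  have hA_norm z : ‖A z‖ = 2 * π * √(∑ l, (k l : ℝ) ^ 2) * ‖z‖ := by
    have hz := hA z.fst z.snd
    simp only [WithLp.equiv_symm_apply, ← Prod.smul_mk, WithLp.toLp_smul] at hz
    rw [show z = WithLp.toLp 2 (z.fst, z.snd) from rfl, hz, norm_smul,
      LinearMap.norm_toLp_sub_eq_of_isSkewAdjoint hB_skew hB_norm, Fin.sum_univ_castSucc,
      Real.norm_of_nonneg Real.two_pi_pos.le, add_comm]
    ring
  have hk_pos : 0 < ∑ l, (k l : ℝ) ^ 2 := by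
    obtain ⟨l, hl⟩ := Function.ne_iff.1 hk
    exact Finset.sum_pos' (fun _ _ => sq_nonneg _)
      ⟨l, Finset.mem_univ l, sq_pos_of_ne_zero (Int.cast_ne_zero.2 hl)⟩
  rw [one_div]
  exact ContinuousLinearMap.opNorm_eq_inv_of_comp_eq_id h2 (by positivity) hA_norm

theorem stmt4 {V : Type*} [NormedAddCommGroup V] [InnerProductSpace ℝ V]
    [FiniteDimensional ℝ V] [Nontrivial V] {m : ℕ} (J : Fin (m + 1) → (V →ₗ[ℝ] V))
    (horth : ∀ l, ∀ x y : V, ⟪J l x, J l y⟫_ℝ = ⟪x, y⟫_ℝ)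
    (hsq : ∀ l, J l ∘ₗ J l = -LinearMap.id)
    (hanti : ∀ l j, l ≠ j → J l ∘ₗ J j = -(J j ∘ₗ J l))
    (k : Fin (m + 1) → ℤ) (hk : k ≠ 0)
    (B : V →ₗ[ℝ] V)
    (hB : B = J (Fin.last m) ∘ₗ (∑ l : Fin m, ((k l.castSucc : ℝ) • J l.castSucc)))
    (A Ainv : WithLp 2 (V × V) →L[ℝ] WithLp 2 (V × V))
    (hA : ∀ X Y : V, A ((WithLp.equiv 2 (V × V)).symm (X, Y)) =
      (WithLp.equiv 2 (V × V)).symm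
        ((2 * π) • ((k (Fin.last m) : ℝ) • X - B Y),
         (2 * π) • (B X - (k (Fin.last m) : ℝ) • Y)))
    (h1 : Ainv.comp A = ContinuousLinearMap.id ℝ (WithLp 2 (V × V)))
    (h2 : A.comp Ainv = ContinuousLinearMap.id ℝ (WithLp 2 (V × V))) :
    ‖Ainv‖ = 1 / (2 * π * Real.sqrt (∑ l, (k l : ℝ) ^ 2)) :=
  stmt4_general J horth hsq hanti k hk B hB A Ainv hA h2
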